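/- arXiv:2103.06635 — 5 statements merged into one kernel-verified Lean document; each statement's English description precedes it below -/
import Mathlib

section
/- Let F(x) and G(x) be formal power series related by G(x) = 1/(1 - x·F(x)). Then for every n ≥ 1, the n×n Hankel determinant of G equals the (n-1)×(n-1) shifted Hankel determinant H^{(1)}_{n-1}(F), i.e. H_n(G) = H^{(1)}_{n-1}(F), where H_0 is taken to be 1. -/
open PowerSeries

/-- The shifted Hankel determinant `H^{(k)}_n(F)`. -/
noncomputable def hankel {R : Type*} [CommRing R] (k n : ℕ) (F : PowerSeries R) : R :=
  Matrix.det (Matrix.of fun i j : Fin n => PowerSeries.coeff (k + (i : ℕ) + (j : ℕ)) F)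

/-!
Put `B = 1 - x F`, so that `G B = 1`, and let `T` be the lower triangular Toeplitz matrix of `B`,
with entries `b_{i-j}` and determinant `b_0 ^ n = 1`. Left multiplication by `T` multiplies column
generating series by `B`. Column `q` of `H_n(G)` lists the coefficients of
`G_q = shift q G = Σ_p g_{p+q} x^p`, so row `j` of `T H_n(G)` is `p ↦ [x^j] G_p B`; splitting
`[x^{p+j}] G B = δ_{p+j,0}` at `p` identifies it with `p ↦ [x^p] (δ_{j,0} - x G B_{j+1})`.
Multiplying by `T` once more, `T (T H_n(G))ᵀ` has columns `δ_{j,0} B - x B_{j+1}`: this is the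
block matrix with corner `1` and lower right block `H^{(2)}_{n-1}(-B) = H^{(1)}_{n-1}(F)`.
-/

open Matrix Finset

namespace PowerSeries

variable {R : Type*}

noncomputable def shift [Semiring R] (n : ℕ) (F : R⟦X⟧) : R⟦X⟧ :=
  mk fun i => coeff (i + n) F

@[simp]
theorem coeff_shift [Semiring R] (n i : ℕ) (F : R⟦X⟧) :
    coeff i (shift n F) = coeff (i + n) F :=
  coeff_mk _ _

/-- Split the antidiagonal `k + l = p + j` of `A * B` according to whether `k < p`. -/
theorem coeff_add_mul [CommSemiring R] (A B : R⟦X⟧) (p j : ℕ) :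
    coeff (p + j) (A * B) = coeff p (X * A * shift (j + 1) B) + coeff j (shift p A * B) := by
  rw [coeff_mul, Nat.sum_antidiagonal_eq_sum_range_succ_mk,
    show (p + j).succ = p + (j + 1) by omega, sum_range_add, coeff_mul j (shift p A),
    Nat.sum_antidiagonal_eq_sum_range_succ_mk]
  congr 1
  · cases p with
    | zero => simp
    | succ t =>
      rw [mul_assoc, coeff_succ_X_mul, coeff_mul, Nat.sum_antidiagonal_eq_sum_range_succ_mk]
      refine sum_congr rfl fun k hk => ?_
      rw [coeff_shift, show t - k + (j + 1) = t + 1 + j - k by grind]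
  · refine sum_congr rfl fun q _ => ?_
    rw [coeff_shift, add_comm q p, Nat.add_sub_add_left]

theorem coeff_shift_mul_of_mul_eq_one [CommRing R] {A B : R⟦X⟧} (hAB : A * B = 1) (p j : ℕ) :
    coeff j (shift p A * B) = coeff p ((if j = 0 then 1 else 0) - X * A * shift (j + 1) B) := by
  rw [map_sub, eq_sub_iff_add_eq, add_comm, ← coeff_add_mul, hAB, coeff_one]
  split_ifs <;> simp_all [coeff_one]

end PowerSeries

section Matrices

variable {R : Type*} [CommRing R]

theorem Matrix.det_succ_of_column_zero {m : ℕ} (M : Matrix (Fin (m + 1)) (Fin (m + 1)) R)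
    (h : ∀ i : Fin m, M i.succ 0 = 0) : M.det = M 0 0 * (M.submatrix Fin.succ Fin.succ).det := by
  simp [det_succ_column_zero M, Fin.sum_univ_succ, h]

noncomputable def lowerToeplitz (n : ℕ) (B : R⟦X⟧) : Matrix (Fin n) (Fin n) R :=
  of fun i j => if (j : ℕ) ≤ i then coeff (i - j) B else 0

theorem det_lowerToeplitz (n : ℕ) (B : R⟦X⟧) :
    (lowerToeplitz n B).det = constantCoeff B ^ n := by
  rw [det_of_isLowerTriangular (lowerToeplitz n B) fun i j hij => if_neg (by simpa using hij)]
  simp [lowerToeplitz]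

theorem lowerToeplitz_mul_of_coeff {n : ℕ} (B : R⟦X⟧) (S : Fin n → R⟦X⟧) :
    lowerToeplitz n B * of (fun p j : Fin n => coeff p (S j)) =
      of fun i j : Fin n => coeff i (S j * B) := by
  ext i j
  have hi := i.isLt
  calc ∑ p : Fin n, lowerToeplitz n B i p * coeff p (S j)
      = ∑ p ∈ range n, if p ≤ i then coeff (i - p) B * coeff p (S j) else 0 := by
        simp only [lowerToeplitz, of_apply, ite_mul, zero_mul]
        exact Fin.sum_univ_eq_sum_range
          (fun p => if p ≤ i then coeff (i - p) B * coeff p (S j) else 0) n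
    _ = ∑ p ∈ range (i + 1), coeff p (S j) * coeff (i - p) B := by
        rw [← sum_filter]
        refine sum_congr (by ext; simp; omega) fun p _ => mul_comm _ _
    _ = coeff i (S j * B) := by
        rw [coeff_mul, Nat.sum_antidiagonal_eq_sum_range_succ_mk]

theorem hankel_zero_eq_det (n : ℕ) (A : R⟦X⟧) :
    hankel 0 n A = (of fun p q : Fin n => coeff p (shift q A)).det := by
  simp [hankel]

theorem lowerToeplitz_mul_transpose_lowerToeplitz_mul_of_mul_eq_one {A B : R⟦X⟧}
    (hAB : A * B = 1) (n : ℕ) :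
    lowerToeplitz n B * (lowerToeplitz n B * of fun p q : Fin n => coeff p (shift q A))ᵀ =
      of fun i j : Fin n => coeff i ((if (j : ℕ) = 0 then B else 0) - X * shift (j + 1) B) := by
  have hrow (j : ℕ) : ((if j = 0 then 1 else 0) - X * A * shift (j + 1) B) * B
      = (if j = 0 then B else 0) - X * shift (j + 1) B := by
    split_ifs <;> linear_combination (-X * shift (j + 1) B) * hAB
  have hcol : (lowerToeplitz n B * of fun p q : Fin n => coeff p (shift q A))ᵀ =
      of fun p j : Fin n =>
        coeff p ((if (j : ℕ) = 0 then 1 else 0) - X * A * shift (j + 1) B) := by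
    rw [lowerToeplitz_mul_of_coeff B fun q => shift q A]
    ext p j
    exact coeff_shift_mul_of_mul_eq_one hAB p j
  rw [hcol, lowerToeplitz_mul_of_coeff]
  ext i j
  rw [of_apply, of_apply, hrow]

theorem hankel_zero_succ_of_mul_eq_one {A B : R⟦X⟧} (hAB : A * B = 1) (hB : constantCoeff B = 1)
    (m : ℕ) : hankel 0 (m + 1) A = hankel 2 m (-B) := by
  have hdet :=
    congrArg det (lowerToeplitz_mul_transpose_lowerToeplitz_mul_of_mul_eq_one hAB (m + 1))
  rw [det_mul, det_transpose, det_mul, det_lowerToeplitz, hB, one_pow, one_mul, one_mul,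
    ← hankel_zero_eq_det] at hdet
  rw [hdet, det_succ_of_column_zero]
  · simp only [of_apply, Fin.val_zero, if_true, coeff_zero_eq_constantCoeff, map_sub, map_mul,
      constantCoeff_X, zero_mul, sub_zero, hB, one_mul, hankel]
    refine congrArg det (ext fun i j => ?_)
    simp [coeff_succ_X_mul]
    ring_nf
  · intro i
    simp [coeff_succ_X_mul]

theorem hankel_succ_X_mul_sub_C (k n : ℕ) (F : R⟦X⟧) (r : R) :
    hankel (k + 1) n (X * F - C r) = hankel k n F := by
  refine congrArg det (ext fun i j => ?_)
  rw [of_apply, of_apply, show k + 1 + i + j = k + i + j + 1 by ring]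
  simp [coeff_succ_X_mul]

end Matrices

theorem stmt1_general {R : Type*} [CommRing R] (F G : PowerSeries R)
    (hG : G * (1 - PowerSeries.X * F) = 1) (n : ℕ) :
    hankel 0 n G = hankel 1 (n - 1) F := by
  cases n with
  | zero => simp [hankel]
  | succ m =>
    rw [hankel_zero_succ_of_mul_eq_one hG (by simp), Nat.add_sub_cancel, neg_sub, ← map_one C,
      hankel_succ_X_mul_sub_C]

theorem stmt1 {R : Type*} [CommRing R] (F G : PowerSeries R)
    (hG : G * (1 - PowerSeries.X * F) = 1) (n : ℕ) (hn : 1 ≤ n) :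
    hankel 0 n G = hankel 1 (n - 1) F :=
  stmt1_general F G hG n
end

section
/- Let F(x) and G(x) be formal power series with G(x) = 1/(1 + x - x·F(x)). Then for every n ≥ 1, the shifted Hankel determinant H^{(1)}_n(G) equals the Hankel determinant H_n(-1+F). -/
/-! Let `g_m`, `a_m` be the coefficients of `G` and `A = F - 1`. The hypothesis says
`G = 1 + X * (A * G)`, i.e. `g₀ = 1` and `g_{m+1} = ∑_{k ≤ m} a_k g_{m-k}`. Splitting this sum for
`m = i + j` at `k = j` gives, for `M = (g_{1+i+j})` and `H = (a_{i+j})`, the matrix identity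
`M = T H + M U`, with `T = (g_{i-l})` lower unitriangular and `U = (a_{j-1-t})` strictly upper
triangular Toeplitz matrices. Hence `M (1 - U) = T H`, and taking determinants `det M = det H`. -/

open PowerSeries

open Matrix Finset

theorem Fin.sum_ite_val_lt_eq_sum_range {M : Type*} [AddCommMonoid M] (f : ℕ → M) {m n : ℕ}
    (h : m ≤ n) :
    ∑ l : Fin n, (if (l : ℕ) < m then f l else 0) = ∑ l ∈ range m, f l := by
  rw [Fin.sum_univ_eq_sum_range (fun l => if l < m then f l else 0), ← sum_filter]
  congr 1
  ext l
  simp only [mem_filter, mem_range]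
  omega

namespace PowerSeries

variable {R : Type*} [CommRing R]

noncomputable def hankelMatrix (k n : ℕ) (F : R⟦X⟧) : Matrix (Fin n) (Fin n) R :=
  of fun i j : Fin n => coeff (k + (i : ℕ) + (j : ℕ)) F

noncomputable def lowerToeplitz (n : ℕ) (G : R⟦X⟧) : Matrix (Fin n) (Fin n) R :=
  of fun i l : Fin n => if (l : ℕ) ≤ i then coeff ((i : ℕ) - l) G else 0

noncomputable def strictUpperToeplitz (n : ℕ) (A : R⟦X⟧) : Matrix (Fin n) (Fin n) R :=
  of fun t j : Fin n => if (t : ℕ) < j then coeff ((j : ℕ) - 1 - t) A else 0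

theorem det_lowerToeplitz (n : ℕ) (G : R⟦X⟧) :
    (lowerToeplitz n G).det = constantCoeff G ^ n := by
  rw [det_of_isLowerTriangular (lowerToeplitz n G) fun i l (h : i < l) => if_neg (not_le.2 h)]
  simp [lowerToeplitz]

theorem det_one_sub_strictUpperToeplitz (n : ℕ) (A : R⟦X⟧) :
    (1 - strictUpperToeplitz n A).det = 1 := by
  have hU : ∀ t j : Fin n, j ≤ t → strictUpperToeplitz n A t j = 0 :=
    fun t j h => if_neg (not_lt.2 h)
  rw [det_of_isUpperTriangular fun t j (h : j < t) => by
    simp [one_apply_ne h.ne', hU t j h.le]]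
  simp [hU]

theorem coeff_succ_of_eq_one_add_X_mul {A G : R⟦X⟧} (hG : G = 1 + X * (A * G)) (m : ℕ) :
    coeff (m + 1) G = ∑ k ∈ range (m + 1), coeff k A * coeff (m - k) G := by
  conv_lhs => rw [hG]
  rw [map_add, coeff_succ_X_mul, coeff_mul, Nat.sum_antidiagonal_eq_sum_range_succ_mk]
  simp [coeff_one]

theorem hankelMatrix_one_eq {A G : R⟦X⟧} (hG : G = 1 + X * (A * G)) (n : ℕ) :
    hankelMatrix 1 n G =
      lowerToeplitz n G * hankelMatrix 0 n A + hankelMatrix 1 n G * strictUpperToeplitz n A := by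
  ext i j
  simp only [Matrix.add_apply, mul_apply, hankelMatrix, lowerToeplitz, strictUpperToeplitz,
    of_apply, mul_ite, ite_mul, mul_zero, zero_mul, ← Nat.lt_add_one_iff]
  rw [Fin.sum_ite_val_lt_eq_sum_range (fun l => coeff (i - l) G * coeff (0 + l + j) A) i.isLt,
    Fin.sum_ite_val_lt_eq_sum_range (fun l => coeff (1 + i + l) G * coeff (j - 1 - l) A) j.isLt.le,
    show 1 + (i : ℕ) + j = i + j + 1 by omega, coeff_succ_of_eq_one_add_X_mul hG]
  -- Split the convolution at `k = j`: terms with `k ≥ j` form `T * H`, those with `k < j` `M * U`.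
  rw [show (i : ℕ) + j + 1 = j + (i + 1) by omega, sum_range_add, add_comm,
    ← sum_range_reflect _ (j : ℕ)]
  congr 1 <;> refine sum_congr rfl fun l hl => ?_ <;> rw [mem_range] at hl
  · rw [mul_comm, show (i : ℕ) + j - (j + l) = i - l by omega,
      show (j : ℕ) + l = 0 + l + j by omega]
  · rw [mul_comm, show (i : ℕ) + j - (j - 1 - l) = 1 + i + l by omega]

theorem det_hankelMatrix_one_of_eq_one_add_X_mul {A G : R⟦X⟧} (hG : G = 1 + X * (A * G)) (n : ℕ) :
    (hankelMatrix 1 n G).det = constantCoeff G ^ n * (hankelMatrix 0 n A).det := by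
  have h : hankelMatrix 1 n G * (1 - strictUpperToeplitz n A) =
      lowerToeplitz n G * hankelMatrix 0 n A := by
    rw [mul_sub, mul_one, sub_eq_iff_eq_add, ← hankelMatrix_one_eq hG]
  simpa [det_one_sub_strictUpperToeplitz, det_lowerToeplitz] using congr_arg det h

end PowerSeries

theorem stmt4_general {R : Type*} [CommRing R] (F G : PowerSeries R)
    (hG : G * (1 + PowerSeries.X - PowerSeries.X * F) = 1) (n : ℕ) :
    hankel 1 n G = hankel 0 n (F - 1) := by
  have hG' : G = 1 + X * ((F - 1) * G) := by linear_combination hG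
  have hG0 : constantCoeff G = 1 := by simpa using congr_arg constantCoeff hG'
  have h := det_hankelMatrix_one_of_eq_one_add_X_mul hG' n
  rw [hG0, one_pow, one_mul] at h
  exact h

theorem stmt4 {R : Type*} [CommRing R] (F G : PowerSeries R)
    (hG : G * (1 + PowerSeries.X - PowerSeries.X * F) = 1) (n : ℕ) (hn : 1 ≤ n) :
    hankel 1 n G = hankel 0 n (F - 1) :=
  stmt4_general F G hG n
end

section
/- For every even integer m ≥ 2 and every subset V of {1,...,m} consisting entirely of odd numbers, the Hankel determinant H_n of the counting sequence of Dyck paths of semilength n with no peak height congruent mod m to an element of V equals 1 for every n ≥ 1. -/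
/-!
Cut paths into pairs of steps. Since the forbidden set contains no even number, a peak at an even
time sits at an even height and is never forbidden, so the number of admissible prefixes of length
`2 s` ending at height `2 k` is the entry `(0, k)` of `J ^ s`, where `J k' k` counts the admissible
step pairs from height `2 k'` to height `2 k`. Reversing a step pair (and exchanging up and down)
shows that `J` is symmetric, hence `d (i + j) = (J ^ (i + j)) 0 0 = ∑ k, (J ^ i) 0 k * (J ^ j) 0 k`:
the Hankel matrix is `L * Lᵀ` with `L i k` the number of prefixes of length `2 i` ending at height
`2 k`, and `L` is lower unitriangular.
-/

/-- Height of a lattice path (given by up/down indicators `p`) after `k` steps. -/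
def pathHeight (p : ℕ → Bool) (k : ℕ) : ℤ :=
  ∑ i ∈ Finset.range k, (if p i then (1 : ℤ) else -1)

/-- The number of Dyck paths of semilength `n` (paths of `2n` steps `(1,1)`/`(1,-1)`
from `(0,0)` to `(2n,0)` staying weakly above the x-axis) none of whose peaks has
height in the set `S`.  A peak is an up-step immediately followed by a down-step;
its height is the y-coordinate of its apex. -/
noncomputable def dyckCount (S : ℕ → Prop) (n : ℕ) : ℕ :=
  Nat.card {p : ℕ → Bool //
    (∀ i, 2 * n ≤ i → p i = false) ∧
    (∀ k, k ≤ 2 * n → 0 ≤ pathHeight p k) ∧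
    pathHeight p (2 * n) = 0 ∧
    (∀ i, i + 1 < 2 * n → p i = true → p (i + 1) = false →
      ¬ S (pathHeight p (i + 1)).toNat) }

open Finset Matrix

theorem Matrix.IsSymm.pow_add_apply_self {ι R : Type*} [Fintype ι] [DecidableEq ι]
    [CommSemiring R] {J : Matrix ι ι R} (hJ : J.IsSymm) (i j : ℕ) (a : ι) :
    (J ^ (i + j)) a a = ∑ k, (J ^ i) a k * (J ^ j) a k := by
  simp only [pow_add, mul_apply, (hJ.pow j).apply]

theorem det_hankel_eq_one_of_eq_sum_mul {R : Type*} [CommRing R] (μ : ℕ → R)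
    (A : ℕ → ℕ → R) (hA : ∀ i k, i < k → A i k = 0) (hA_self : ∀ i, A i i = 1)
    (hμ : ∀ i j, μ (i + j) = ∑ k ∈ range (i + 1), A i k * A j k) (n : ℕ) :
    det (of fun i j : Fin n => μ (i + j)) = 1 := by
  set L : Matrix (Fin n) (Fin n) R := of fun i k => A i k
  have hH : (of fun i j : Fin n => μ (i + j)) = L * Lᵀ := by
    ext i j
    simp only [L, mul_apply, transpose_apply, of_apply, hμ]
    rw [Fin.sum_univ_eq_sum_range (fun k => A i k * A j k)]
    refine sum_subset (range_subset_range.2 i.2) fun k _ hk => ?_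
    rw [hA i k (by simpa using hk), zero_mul]
  have hL : L.det = 1 := by
    rw [det_of_isLowerTriangular L fun i k hik => hA i k hik]
    simp [L, hA_self]
  rw [hH, det_mul, det_transpose, hL, one_mul]

variable {S : ℕ → Prop} {s k : ℕ} {p q : ℕ → Bool}

def stepValue (b : Bool) : ℤ := if b then 1 else -1

lemma pathHeight_succ (p : ℕ → Bool) (t : ℕ) :
    pathHeight p (t + 1) = pathHeight p t + stepValue (p t) :=
  sum_range_succ _ _

lemma pathHeight_congr {t : ℕ} (h : ∀ i < t, p i = q i) : pathHeight p t = pathHeight q t :=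
  sum_congr rfl fun i hi => by rw [h i (mem_range.1 hi)]

lemma pathHeight_le (p : ℕ → Bool) (t : ℕ) : pathHeight p t ≤ t := by
  induction t with
  | zero => simp [pathHeight]
  | succ t ih =>
    rw [pathHeight_succ]
    cases p t <;> simp [stepValue] <;> omega

lemma even_pathHeight_two_mul (p : ℕ → Bool) (s : ℕ) : Even (pathHeight p (2 * s)) := by
  induction s with
  | zero => simp [pathHeight]
  | succ s ih =>
    rw [show 2 * (s + 1) = 2 * s + 1 + 1 by ring, pathHeight_succ, pathHeight_succ]
    cases p (2 * s) <;> cases p (2 * s + 1) <;> simp [stepValue, ih, parity_simps]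

lemma forall_eq_true_of_pathHeight_eq {t : ℕ} (h : pathHeight p t = t) :
    ∀ i < t, p i = true := by
  induction t with
  | zero => simp
  | succ t ih =>
    rw [pathHeight_succ] at h
    have hle := pathHeight_le p t
    have hpt : p t = true := by
      cases hp : p t
      · simp [stepValue, hp] at h
        omega
      · rfl
    intro i hi
    rcases Nat.lt_succ_iff_lt_or_eq.1 hi with hi | rfl
    · exact ih (by simp_all [stepValue]) i hi
    · exact hpt

structure IsDyckPrefix (S : ℕ → Prop) (s k : ℕ) (p : ℕ → Bool) : Prop where
  eq_false : ∀ i, 2 * s ≤ i → p i = false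
  nonneg : ∀ j, j ≤ 2 * s → 0 ≤ pathHeight p j
  pathHeight_eq : pathHeight p (2 * s) = 2 * k
  peak : ∀ i, i + 1 < 2 * s → p i = true → p (i + 1) = false →
    ¬ S (pathHeight p (i + 1)).toNat

noncomputable def prefixCount (S : ℕ → Prop) (s k : ℕ) : ℕ :=
  Nat.card {p // IsDyckPrefix S s k p}

lemma dyckCount_eq_prefixCount (S : ℕ → Prop) (s : ℕ) : dyckCount S s = prefixCount S s 0 :=
  Nat.card_congr <| Equiv.subtypeEquivRight fun _ =>
    ⟨fun ⟨h₁, h₂, h₃, h₄⟩ => ⟨h₁, h₂, by simpa using h₃, h₄⟩,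
      fun ⟨h₁, h₂, h₃, h₄⟩ => ⟨h₁, h₂, by simpa using h₃, h₄⟩⟩

instance (S : ℕ → Prop) (s k : ℕ) : Finite {p // IsDyckPrefix S s k p} :=
  Finite.of_injective (fun p i => p.1 (i : Fin (2 * s))) fun p q h =>
    Subtype.ext <| funext fun i => by
      rcases lt_or_ge i (2 * s) with hi | hi
      · exact congrFun h ⟨i, hi⟩
      · rw [p.2.eq_false i hi, q.2.eq_false i hi]

lemma prefixCount_eq_zero_of_lt (S : ℕ → Prop) (h : s < k) : prefixCount S s k = 0 := by
  have : IsEmpty {p // IsDyckPrefix S s k p} :=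
    ⟨fun p => by have := pathHeight_le p.1 (2 * s); rw [p.2.pathHeight_eq] at this; omega⟩
  exact Nat.card_of_isEmpty

lemma prefixCount_self (S : ℕ → Prop) (s : ℕ) : prefixCount S s s = 1 := by
  set up : ℕ → Bool := fun i => decide (i < 2 * s)
  have h_up : ∀ j ≤ 2 * s, pathHeight up j = j := fun j hj => by
    have h_one : ∀ i ∈ range j, (if up i then 1 else -1 : ℤ) = 1 := fun i hi => by
      simp only [mem_range] at hi
      simp [up, show i < 2 * s by omega]
    simp [pathHeight, sum_congr rfl h_one]
  have h_unique : ∀ p, IsDyckPrefix S s s p → p = up := fun p hp => funext fun i => by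
    rcases lt_or_ge i (2 * s) with hi | hi
    · simpa [up, hi] using forall_eq_true_of_pathHeight_eq (by simpa using hp.pathHeight_eq) i hi
    · simpa [up, hi.not_gt] using hp.eq_false i hi
  have h_up_mem : IsDyckPrefix S s s up :=
    ⟨fun i hi => by simp [up]; omega, fun j hj => by simp [h_up j hj],
      by simp [h_up], fun i hi _ h => by simp [up] at h; omega⟩
  have : Unique {p // IsDyckPrefix S s s p} :=
    ⟨⟨⟨up, h_up_mem⟩⟩, fun p => Subtype.ext (h_unique p.1 p.2)⟩
  exact Nat.card_unique

def IsStepPair (S : ℕ → Prop) (k' : ℕ) (ab : Bool × Bool) (k : ℕ) : Prop :=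
  0 ≤ 2 * (k' : ℤ) + stepValue ab.1 ∧
    2 * (k' : ℤ) + stepValue ab.1 + stepValue ab.2 = 2 * k ∧
    (ab = (true, false) → ¬ S (2 * k' + 1))

noncomputable def stepCount (S : ℕ → Prop) (k' k : ℕ) : ℕ :=
  Nat.card {ab // IsStepPair S k' ab k}

lemma IsStepPair.reverse {k' : ℕ} {ab : Bool × Bool} (h : IsStepPair S k' ab k) :
    IsStepPair S k (!ab.2, !ab.1) k' := by
  obtain ⟨a, b⟩ := ab
  obtain ⟨h₁, h₂, h₃⟩ := h
  cases a <;> cases b <;> simp_all [IsStepPair, stepValue] <;> omega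

lemma stepCount_comm (S : ℕ → Prop) (k' k : ℕ) : stepCount S k' k = stepCount S k k' := by
  let e := Function.Involutive.toPerm (fun ab : Bool × Bool => (!ab.2, !ab.1)) fun ab => by simp
  exact Nat.card_congr <| e.subtypeEquiv fun ab => ⟨IsStepPair.reverse, fun h => by
    simpa using (show IsStepPair S k (!ab.2, !ab.1) k' from h).reverse⟩

def truncatePath (t : ℕ) (p : ℕ → Bool) : ℕ → Bool :=
  fun i => if i < t then p i else false

def appendPair (t : ℕ) (q : ℕ → Bool) (ab : Bool × Bool) : ℕ → Bool :=
  fun i => if i = t then ab.1 else if i = t + 1 then ab.2 else q i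

section Splitting

variable {t : ℕ} {ab : Bool × Bool}

lemma pathHeight_truncatePath {j : ℕ} (h : j ≤ t) :
    pathHeight (truncatePath t p) j = pathHeight p j :=
  pathHeight_congr fun i hi => if_pos (by omega)

lemma pathHeight_appendPair {j : ℕ} (h : j ≤ t) :
    pathHeight (appendPair t q ab) j = pathHeight q j :=
  pathHeight_congr fun i hi => by simp only [appendPair]; rw [if_neg (by omega), if_neg (by omega)]

lemma pathHeight_appendPair_succ :
    pathHeight (appendPair t q ab) (t + 1) = pathHeight q t + stepValue ab.1 := by
  rw [pathHeight_succ, pathHeight_appendPair le_rfl]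
  simp [appendPair]

lemma pathHeight_appendPair_add_two : pathHeight (appendPair t q ab) (t + 2) =
    pathHeight q t + stepValue ab.1 + stepValue ab.2 := by
  rw [pathHeight_succ, pathHeight_appendPair_succ]
  simp [appendPair]

lemma truncatePath_appendPair (hq : ∀ i, t ≤ i → q i = false) :
    truncatePath t (appendPair t q ab) = q :=
  funext fun i => by
    by_cases hi : i < t
    · simp [truncatePath, appendPair, hi, hi.ne, show i ≠ t + 1 by omega]
    · simp [truncatePath, hi, hq i (by omega)]

lemma appendPair_truncatePath (hp : ∀ i, t + 2 ≤ i → p i = false) :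
    appendPair t (truncatePath t p) (p t, p (t + 1)) = p :=
  funext fun i => by
    simp only [appendPair, truncatePath]
    split_ifs <;> first | subst_vars; rfl | rfl | (symm; apply hp; omega)

end Splitting

namespace IsDyckPrefix

variable {k' : ℕ}

lemma truncate (hp : IsDyckPrefix S (s + 1) k p) (h : pathHeight p (2 * s) = 2 * k') :
    IsDyckPrefix S s k' (truncatePath (2 * s) p) where
  eq_false i hi := by simp [truncatePath, hi.not_gt]
  nonneg j hj := by rw [pathHeight_truncatePath hj]; exact hp.nonneg j (by omega)
  pathHeight_eq := by rw [pathHeight_truncatePath le_rfl, h]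
  peak i hi hpi hpi' := by
    simp only [truncatePath, show i < 2 * s by omega, hi, if_true] at hpi hpi'
    rw [pathHeight_truncatePath hi.le]
    exact hp.peak i (by omega) hpi hpi'

lemma isStepPair (hp : IsDyckPrefix S (s + 1) k p) (h : pathHeight p (2 * s) = 2 * k') :
    IsStepPair S k' (p (2 * s), p (2 * s + 1)) k := by
  have h₁ := pathHeight_succ p (2 * s)
  have h₂ := pathHeight_succ p (2 * s + 1)
  refine ⟨?_, ?_, fun hab => ?_⟩
  · have := hp.nonneg (2 * s + 1) (by omega)
    dsimp only
    omega
  · have := hp.pathHeight_eq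
    rw [show 2 * (s + 1) = 2 * s + 1 + 1 by ring] at this
    dsimp only
    omega
  · simp only [Prod.mk.injEq] at hab
    have := hp.peak (2 * s) (by omega) hab.1 hab.2
    rwa [h₁, h, hab.1, show 2 * (k' : ℤ) + stepValue true = ((2 * k' + 1 : ℕ) : ℤ) by
      simp [stepValue], Int.toNat_natCast] at this

lemma append (hS : ∀ j, ¬ S (2 * j)) (hq : IsDyckPrefix S s k' q) {ab : Bool × Bool}
    (hab : IsStepPair S k' ab k) : IsDyckPrefix S (s + 1) k (appendPair (2 * s) q ab) where
  eq_false i hi := by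
    simp only [appendPair]
    rw [if_neg (by omega), if_neg (by omega)]
    exact hq.eq_false i (by omega)
  nonneg j hj := by
    obtain ⟨h₁, h₂, -⟩ := hab
    rcases Nat.lt_or_ge (2 * s) j with hj' | hj'
    · obtain rfl | rfl : j = 2 * s + 1 ∨ j = 2 * s + 2 := by omega
      · rw [pathHeight_appendPair_succ, hq.pathHeight_eq]; exact h₁
      · rw [pathHeight_appendPair_add_two, hq.pathHeight_eq, h₂]; positivity
    · rw [pathHeight_appendPair hj']; exact hq.nonneg j hj'
  pathHeight_eq := by rw [Nat.mul_succ, pathHeight_appendPair_add_two, hq.pathHeight_eq, hab.2.1]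
  peak i hi hpi hpi' := by
    rcases Nat.lt_or_ge (i + 1) (2 * s) with hi' | hi'
    · simp only [appendPair, show i ≠ 2 * s by omega, show i + 1 ≠ 2 * s by omega,
        show i ≠ 2 * s + 1 by omega, show i + 1 ≠ 2 * s + 1 by omega, if_false] at hpi hpi'
      rw [pathHeight_appendPair hi'.le]
      exact hq.peak i hi' hpi hpi'
    obtain hi'' | rfl : i + 1 = 2 * s ∨ i = 2 * s := by omega
    · -- a peak at the junction has even height `2 * k'`
      rw [hi'', pathHeight_appendPair le_rfl, hq.pathHeight_eq,
        show (2 * (k' : ℤ)).toNat = 2 * k' by omega]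
      exact hS k'
    · simp [appendPair] at hpi hpi'
      rw [pathHeight_appendPair_succ, hq.pathHeight_eq, hpi,
        show 2 * (k' : ℤ) + stepValue true = ((2 * k' + 1 : ℕ) : ℤ) by simp [stepValue],
        Int.toNat_natCast]
      exact hab.2.2 (Prod.ext hpi hpi')

end IsDyckPrefix

def prefixFiberEquiv (hS : ∀ j, ¬ S (2 * j)) (k' : ℕ) :
    {p // IsDyckPrefix S (s + 1) k p ∧ pathHeight p (2 * s) = 2 * k'} ≃
      {q // IsDyckPrefix S s k' q} × {ab // IsStepPair S k' ab k} where
  toFun p := (⟨truncatePath (2 * s) p, p.2.1.truncate p.2.2⟩,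
    ⟨(p.1 (2 * s), p.1 (2 * s + 1)), p.2.1.isStepPair p.2.2⟩)
  invFun x := ⟨appendPair (2 * s) x.1 x.2, x.1.2.append hS x.2.2,
    by rw [pathHeight_appendPair le_rfl, x.1.2.pathHeight_eq]⟩
  left_inv p := Subtype.ext <| appendPair_truncatePath fun i hi => p.2.1.eq_false i (by omega)
  right_inv x := Prod.ext (Subtype.ext (truncatePath_appendPair x.1.2.eq_false))
    (Subtype.ext (by simp [appendPair]))

lemma prefixCount_succ (hS : ∀ j, ¬ S (2 * j)) {K : ℕ} (hK : s < K) (k : ℕ) :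
    prefixCount S (s + 1) k = ∑ k' : Fin K, prefixCount S s k' * stepCount S k' k := by
  let halfHeight : {p // IsDyckPrefix S (s + 1) k p} → Fin K := fun p =>
    ⟨(pathHeight p.1 (2 * s)).toNat / 2, by have := pathHeight_le p.1 (2 * s); omega⟩
  have h_fiber (p) (k' : Fin K) :
      halfHeight p = k' ↔ pathHeight p.1 (2 * s) = 2 * (k' : ℕ) := by
    obtain ⟨r, hr⟩ := even_pathHeight_two_mul p.1 s
    have := p.2.nonneg (2 * s) (by omega)
    simp only [halfHeight, Fin.ext_iff]
    omega
  calc prefixCount S (s + 1) k = ∑ k', Nat.card {p // halfHeight p = k'} := by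
        rw [prefixCount, ← Nat.card_sigma]
        exact Nat.card_congr (Equiv.sigmaFiberEquiv halfHeight).symm
    _ = ∑ k' : Fin K, prefixCount S s k' * stepCount S k' k := sum_congr rfl fun k' _ => by
        rw [prefixCount, stepCount, ← Nat.card_prod]
        exact Nat.card_congr <| (Equiv.subtypeEquivRight fun p => h_fiber p k').trans <|
          (Equiv.subtypeSubtypeEquivSubtypeInter _ _).trans (prefixFiberEquiv hS k')

noncomputable def stepMatrix (S : ℕ → Prop) (K : ℕ) : Matrix (Fin K) (Fin K) ℤ :=
  of fun k' k => (stepCount S k' k : ℤ)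

lemma stepMatrix_isSymm (S : ℕ → Prop) (K : ℕ) : (stepMatrix S K).IsSymm :=
  ext fun k' k => by simp [stepMatrix, stepCount_comm S k']

lemma prefixCount_eq_stepMatrix_pow_apply (hS : ∀ j, ¬ S (2 * j)) {N s : ℕ} (hs : s ≤ N + 1)
    (k : Fin (N + 1)) : (prefixCount S s k : ℤ) = (stepMatrix S (N + 1) ^ s) 0 k := by
  induction s generalizing k with
  | zero =>
    rcases Nat.eq_zero_or_pos k with hk | hk
    · obtain rfl : k = 0 := Fin.ext hk
      simp [prefixCount_self]
    · rw [prefixCount_eq_zero_of_lt S hk, pow_zero, one_apply_ne (Fin.ne_of_lt hk)]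
      rfl
  | succ s ih =>
    rw [prefixCount_succ hS (by omega : s < N + 1), pow_succ, mul_apply]
    push_cast
    exact sum_congr rfl fun k' _ => by rw [ih (by omega) k']; rfl

lemma dyckCount_add_eq_sum (hS : ∀ j, ¬ S (2 * j)) (i j : ℕ) :
    (dyckCount S (i + j) : ℤ) =
      ∑ k ∈ range (i + 1), (prefixCount S i k : ℤ) * prefixCount S j k := by
  have h_pow (s) (hs : s ≤ i + j + 1) (k : Fin (i + j + 1)) :=
    prefixCount_eq_stepMatrix_pow_apply hS hs k
  have h_zero := h_pow (i + j) (by omega) 0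
  rw [Fin.val_zero] at h_zero
  rw [dyckCount_eq_prefixCount, h_zero, (stepMatrix_isSymm S _).pow_add_apply_self]
  simp only [← h_pow i (by omega), ← h_pow j (by omega)]
  rw [Fin.sum_univ_eq_sum_range (fun k => (prefixCount S i k : ℤ) * prefixCount S j k)]
  refine (sum_subset (range_subset_range.2 (by omega)) fun k _ hk => ?_).symm
  rw [prefixCount_eq_zero_of_lt S (by simpa using hk), Nat.cast_zero, zero_mul]

lemma two_mul_not_mem_of_odd {m : ℕ} (hme : Even m) {V : Finset ℕ}
    (hVm : V ⊆ Finset.Icc 1 m) (hVodd : ∀ v ∈ V, Odd v) (j : ℕ) :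
    ¬ (0 < 2 * j ∧ ∃ v ∈ V, 2 * j % m = v % m) := by
  rintro ⟨-, v, hv, hmod⟩
  have hv_le := (Finset.mem_Icc.1 (hVm hv)).2
  have hv_odd := Nat.odd_iff.1 (hVodd v hv)
  have hv_lt : v < m := by have := Nat.even_iff.1 hme; omega
  have h_even : 2 * j % m % 2 = 0 := by rw [Nat.mod_mod_of_dvd _ hme.two_dvd]; omega
  rw [hmod, Nat.mod_eq_of_lt hv_lt] at h_even
  omega

theorem stmt13_general (m : ℕ) (hme : Even m) (V : Finset ℕ)
    (hVm : ↑V ⊆ Finset.Icc 1 m) (hVodd : ∀ v ∈ V, Odd v) (n : ℕ) :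
    Matrix.det (Matrix.of fun i j : Fin n =>
        (dyckCount (fun k => 0 < k ∧ ∃ v ∈ V, k % m = v % m) ((i : ℕ) + (j : ℕ)) : ℤ))
      = 1 :=
  det_hankel_eq_one_of_eq_sum_mul (fun s => (dyckCount _ s : ℤ))
    (fun i k => (prefixCount _ i k : ℤ))
    (fun _ _ h => by simp [prefixCount_eq_zero_of_lt _ h]) (fun _ => by simp [prefixCount_self])
    (dyckCount_add_eq_sum (two_mul_not_mem_of_odd hme hVm hVodd)) n

/-- For any even `m ≥ 2` and any set `V ⊆ {1,…,m}` of odd numbers, every Hankel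
determinant of the counting sequence of Dyck paths whose peak heights avoid the
union of the congruence classes of elements of `V` modulo `m` equals `1`. -/
theorem stmt13 (m : ℕ) (hm : 2 ≤ m) (hme : Even m) (V : Finset ℕ)
    (hVm : ↑V ⊆ Finset.Icc 1 m) (hVodd : ∀ v ∈ V, Odd v) (n : ℕ) (hn : 1 ≤ n) :
    Matrix.det (Matrix.of fun i j : Fin n =>
        (dyckCount (fun k => 0 < k ∧ ∃ v ∈ V, k % m = v % m) ((i : ℕ) + (j : ℕ)) : ℤ))
      = 1 :=
  stmt13_general m hme V hVm hVodd n
end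

section
/- Define rational numbers T_1, ..., T_b by T_1 = 2 - t_1 and T_{j+1} = 2 - t_{j+1} - 1/T_j for a sequence of positive integers (t_1,...,t_b) such that all T_j are nonzero (an admissible sequence). Then for every 1 ≤ j ≤ b, the product T_1·T_2···T_j is an integer. -/
/-!
Write `P_j = T_1 ⋯ T_j`, so `P_0 = 1` and `P_1 = 2 - t_1`. Multiplying the recurrence for
`T_{j+2}` by `P_{j+1}` and using `P_{j+1} / T_{j+1} = P_j` gives the three-term recurrence
`P_{j+2} = (2 - t_{j+2}) P_{j+1} - P_j` with integer coefficients, so every `P_j` is an integer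
(it is a continuant of the entries `2 - t_k`).
-/

open Finset

theorem prod_Icc_one_add_two_eq_mul_sub {K : Type*} [Field K] (T : ℕ → K) (n : ℕ) (a : K)
    (hne : T (n + 1) ≠ 0) (hrec : T (n + 2) = a - 1 / T (n + 1)) :
    ∏ k ∈ Icc 1 (n + 2), T k = a * ∏ k ∈ Icc 1 (n + 1), T k - ∏ k ∈ Icc 1 n, T k := by
  rw [prod_Icc_succ_top (by omega : 1 ≤ n + 1 + 1), prod_Icc_succ_top (by omega : 1 ≤ n + 1),
    hrec]
  field_simp

theorem Subring.mem_of_three_term_recurrence {R : Type*} [Ring R] (S : Subring R) (b : ℕ)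
    (P : ℕ → R) (h0 : P 0 ∈ S) (h1 : P 1 ∈ S)
    (hrec : ∀ n, n + 2 ≤ b → ∃ a ∈ S, P (n + 2) = a * P (n + 1) - P n) :
    ∀ j ≤ b, P j ∈ S := by
  intro j
  induction j using Nat.twoStepInduction with
  | zero => exact fun _ => h0
  | one => exact fun _ => h1
  | more n ih0 ih1 =>
    intro hn
    obtain ⟨a, ha, hP⟩ := hrec n hn
    rw [hP]
    exact sub_mem (mul_mem ha (ih1 (by omega))) (ih0 (by omega))

theorem stmt14_general (b : ℕ) (t : ℕ → ℕ)
    (T : ℕ → ℚ)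
    (hT1 : 1 ≤ b → T 1 = 2 - (t 1 : ℚ))
    (hTrec : ∀ j, 1 ≤ j → j + 1 ≤ b → T (j + 1) = 2 - (t (j + 1) : ℚ) - 1 / T j)
    (hTne : ∀ j, 1 ≤ j → j ≤ b → T j ≠ 0) :
    ∀ j, 1 ≤ j → j ≤ b → ∃ z : ℤ, ∏ k ∈ Finset.Icc 1 j, T k = (z : ℚ) := by
  intro j hj hjb
  have hb : 1 ≤ b := hj.trans hjb
  have two_sub_mem (m : ℕ) : (2 - m : ℚ) ∈ (⊥ : Subring ℚ) :=
    Subring.mem_bot.mpr ⟨2 - m, by push_cast; ring⟩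
  have hmem := Subring.mem_of_three_term_recurrence ⊥ b (fun j => ∏ k ∈ Icc 1 j, T k)
    (by simp) (by simpa [hT1 hb] using two_sub_mem (t 1)) fun n hn =>
      ⟨_, two_sub_mem (t (n + 2)), prod_Icc_one_add_two_eq_mul_sub T n _
        (hTne (n + 1) (by omega) (by omega)) (hTrec (n + 1) (by omega) hn)⟩
  obtain ⟨z, hz⟩ := Subring.mem_bot.mp (hmem j hjb)
  exact ⟨z, hz.symm⟩

/-- For an admissible sequence `(t_1, …, t_b)` of positive integers, with dual
sequence `T_1 = 2 - t_1`, `T_{j+1} = 2 - t_{j+1} - 1/T_j`, all nonzero, every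
partial product `T_1 · T_2 ⋯ T_j` (for `1 ≤ j ≤ b`) is an integer. -/
theorem stmt14 (b : ℕ) (t : ℕ → ℕ) (ht : ∀ j, 1 ≤ j → j ≤ b → 0 < t j)
    (T : ℕ → ℚ)
    (hT1 : 1 ≤ b → T 1 = 2 - (t 1 : ℚ))
    (hTrec : ∀ j, 1 ≤ j → j + 1 ≤ b → T (j + 1) = 2 - (t (j + 1) : ℚ) - 1 / T j)
    (hTne : ∀ j, 1 ≤ j → j ≤ b → T j ≠ 0) :
    ∀ j, 1 ≤ j → j ≤ b → ∃ z : ℤ, ∏ k ∈ Finset.Icc 1 j, T k = (z : ℚ) :=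
  stmt14_general b t T hT1 hTrec hTne
end

section
/- Consider the integer recurrence d_0 = 0, d_1 = -1, d_{j+1} = d_j(2 - t_j) - d_{j-1} for 1 ≤ j ≤ ℓ-1, where (t_1,...,t_{ℓ-1}) is an admissible sequence of positive integers with dual sequence T_j = h(t_1,...,t_j). Then d_{j+1} = d_1·T_1·T_2···T_j for every 1 ≤ j ≤ ℓ-1. In particular, if (t_1,...,t_{ℓ-1}) is primitive (T_{ℓ-1} = 0 and T_j ≠ 0 for j < ℓ-1), then d_ℓ = 0 and d_j ≠ 0 for 1 ≤ j ≤ ℓ-1. -/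
/-! The recurrence `d_{j+1} = a_j d_j - d_{j-1}` is a continuant recurrence and the dual sequence
`T_j = a_j - 1 / T_{j-1}` is the sequence of its successive ratios: from `d_j = d_{j-1} T_{j-1}`
one gets `d_{j+1} = d_j a_j - d_j / T_{j-1} = d_j T_j`. Telescoping gives the product formula, so
`d_ℓ` vanishes exactly because `T_{ℓ-1}` does, while the earlier `d_j` are products of nonzero
factors. -/

open Finset

theorem eq_mul_prod_Icc_of_succ_eq_mul {M : Type*} [CommMonoid M] {d T : ℕ → M} {n : ℕ}
    (hratio : ∀ j, 1 ≤ j → j ≤ n → d (j + 1) = d j * T j) :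
    ∀ j ≤ n, d (j + 1) = d 1 * ∏ k ∈ Icc 1 j, T k := by
  intro j hj
  induction j with
  | zero => simp
  | succ j ih =>
    rw [hratio (j + 1) (by omega) hj, ih (by omega), prod_Icc_succ_top (by omega), mul_assoc]

theorem succ_eq_mul_of_recurrence {K : Type*} [Field K] {a T d : ℕ → K} {n : ℕ}
    (hd0 : d 0 = 0) (hT1 : T 1 = a 1)
    (hTrec : ∀ j, 1 ≤ j → j + 1 ≤ n → T (j + 1) = a (j + 1) - 1 / T j)
    (hTne : ∀ j, 1 ≤ j → j + 1 ≤ n → T j ≠ 0)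
    (hdrec : ∀ j, 1 ≤ j → j ≤ n → d (j + 1) = d j * a j - d (j - 1)) :
    ∀ j, 1 ≤ j → j ≤ n → d (j + 1) = d j * T j := by
  intro j hj
  induction j, hj using Nat.le_induction with
  | base => intro h1; rw [hdrec 1 le_rfl h1, Nat.sub_self, hd0, hT1, sub_zero]
  | succ j hj ih =>
    intro hjn
    have hTj := hTne j hj hjn
    rw [hdrec (j + 1) (by omega) hjn, Nat.add_sub_cancel, hTrec j hj hjn, ih (by omega)]
    field_simp

theorem stmt17_general (ℓ : ℕ) (hℓ : 2 ≤ ℓ) (t : ℕ → ℕ)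
    (T : ℕ → ℚ)
    (hT1 : T 1 = 2 - (t 1 : ℚ))
    (hTrec : ∀ j, 1 ≤ j → j + 1 ≤ ℓ - 1 → T (j + 1) = 2 - (t (j + 1) : ℚ) - 1 / T j)
    (hTne : ∀ j, 1 ≤ j → j ≤ ℓ - 2 → T j ≠ 0)
    (d : ℕ → ℤ) (hd0 : d 0 = 0) (hd1 : d 1 = -1)
    (hdrec : ∀ j, 1 ≤ j → j ≤ ℓ - 1 → d (j + 1) = d j * (2 - (t j : ℤ)) - d (j - 1)) :
    (∀ j, 1 ≤ j → j ≤ ℓ - 1 →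
      (d (j + 1) : ℚ) = (d 1 : ℚ) * ∏ k ∈ Finset.Icc 1 j, T k) ∧
    (T (ℓ - 1) = 0 → d ℓ = 0 ∧ ∀ j, 1 ≤ j → j ≤ ℓ - 1 → d j ≠ 0) := by
  have hratio := succ_eq_mul_of_recurrence (a := fun j ↦ 2 - (t j : ℚ)) (d := fun j ↦ (d j : ℚ))
    (by simp [hd0]) hT1 hTrec (fun j hj hjn ↦ hTne j hj (by omega))
    (fun j hj hjn ↦ by exact_mod_cast hdrec j hj hjn)
  have hprod := eq_mul_prod_Icc_of_succ_eq_mul (d := fun j ↦ (d j : ℚ)) hratio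
  refine ⟨fun j _ hj ↦ hprod j hj, fun hT0 ↦ ⟨?_, ?_⟩⟩
  · have hdℓ := hprod (ℓ - 1) le_rfl
    rw [Nat.sub_add_cancel (by omega), prod_eq_zero (mem_Icc.mpr ⟨by omega, le_rfl⟩) hT0,
      mul_zero] at hdℓ
    exact_mod_cast hdℓ
  · rintro _ hj hjℓ
    obtain ⟨i, rfl⟩ := Nat.exists_eq_add_of_le' hj
    have hTi : ∏ k ∈ Icc 1 i, T k ≠ 0 :=
      prod_ne_zero_iff.mpr fun k hk ↦ hTne k (mem_Icc.mp hk).1 (by grind)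
    have hdi : (d (i + 1) : ℚ) ≠ 0 := by
      rw [hprod i (by omega), hd1]
      simpa using hTi
    exact_mod_cast hdi

/-- For the integer recurrence `d_0 = 0`, `d_1 = -1`,
`d_{j+1} = d_j(2 - t_j) - d_{j-1}` attached to an admissible sequence
`(t_1, …, t_{ℓ-1})` with dual sequence `(T_j)`, one has
`d_{j+1} = d_1 · T_1 ⋯ T_j` for `1 ≤ j ≤ ℓ-1`; in particular, if the sequence is
primitive (`T_{ℓ-1} = 0`), then `d_ℓ = 0` and `d_j ≠ 0` for `1 ≤ j ≤ ℓ-1`. -/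
theorem stmt17 (ℓ : ℕ) (hℓ : 2 ≤ ℓ) (t : ℕ → ℕ)
    (ht : ∀ j, 1 ≤ j → j ≤ ℓ - 1 → 0 < t j)
    (T : ℕ → ℚ)
    (hT1 : T 1 = 2 - (t 1 : ℚ))
    (hTrec : ∀ j, 1 ≤ j → j + 1 ≤ ℓ - 1 → T (j + 1) = 2 - (t (j + 1) : ℚ) - 1 / T j)
    (hTne : ∀ j, 1 ≤ j → j ≤ ℓ - 2 → T j ≠ 0)
    (d : ℕ → ℤ) (hd0 : d 0 = 0) (hd1 : d 1 = -1)
    (hdrec : ∀ j, 1 ≤ j → j ≤ ℓ - 1 → d (j + 1) = d j * (2 - (t j : ℤ)) - d (j - 1)) :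
    (∀ j, 1 ≤ j → j ≤ ℓ - 1 →
      (d (j + 1) : ℚ) = (d 1 : ℚ) * ∏ k ∈ Finset.Icc 1 j, T k) ∧
    (T (ℓ - 1) = 0 → d ℓ = 0 ∧ ∀ j, 1 ≤ j → j ≤ ℓ - 1 → d j ≠ 0) :=
  stmt17_general ℓ hℓ t T hT1 hTrec hTne d hd0 hd1 hdrec
end
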